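/- arXiv:2406.16874 — 4 statements merged into one kernel-verified Lean document; each statement's English description precedes it below -/
import Mathlib

section
/- Let η : ℝ^n → ℝ be continuously differentiable, let f : ℝ^n → ℝ^n and g : ℝ^n → ℝ^{n×m} be continuous, and define D = {x ∈ ℝ^n : η(x) ≥ 0}. Assume that for all x in the boundary of D, if L_f η(x) ≤ 0 then L_g η(x) ≠ 0. Define u_i : D → ℝ^m by u_i(x) = −L_f η(x) L_g η(x)^T / (L_g η(x) L_g η(x)^T + η(x)^2) if L_f η(x) < 0, and u_i(x) = 0 if L_f η(x) ≥ 0. Then for all x in the boundary of D, L_f η(x) + L_g η(x) u_i(x) ≥ 0; in particular, for all x in the boundary of D, sup_{u ∈ ℝ^m} [L_f η(x) + L_g η(x) u] ≥ 0, i.e., η is a relaxed control barrier function on D. -/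
/-- Lie derivative of `η` along the vector field `f`: `L_f η(x) = η′(x) f(x)`. -/
noncomputable def LieF {n : ℕ} (η : (Fin n → ℝ) → ℝ) (f : (Fin n → ℝ) → Fin n → ℝ)
    (x : Fin n → ℝ) : ℝ :=
  fderiv ℝ η x (f x)

/-- Lie derivative of `η` along the columns of `g`: `L_g η(x) = η′(x) g(x)`,
a row vector in `ℝ^{1×m}`. -/
noncomputable def LieG {n m : ℕ} (η : (Fin n → ℝ) → ℝ)
    (g : (Fin n → ℝ) → Fin n → Fin m → ℝ) (x : Fin n → ℝ) : Fin m → ℝ :=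
  fun i => fderiv ℝ η x (fun k => g x k i)

/-- Lemma 1(a): under the stated boundary condition, the feedback `u_i` renders
`L_f η + L_g η u_i ≥ 0` on the boundary of `D`; in particular
`sup_u [L_f η(x) + L_g η(x) u] ≥ 0` there, i.e. `η` is an R-CBF on `D`. -/
theorem rcbf_of_boundary_condition {n m : ℕ}
    (η : (Fin n → ℝ) → ℝ) (hη : ContDiff ℝ 1 η)
    (f : (Fin n → ℝ) → Fin n → ℝ) (hf : Continuous f)
    (g : (Fin n → ℝ) → Fin n → Fin m → ℝ) (hg : Continuous g)
    (D : Set (Fin n → ℝ)) (hD : D = {x | 0 ≤ η x})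
    (hbd : ∀ x ∈ frontier D, LieF η f x ≤ 0 → LieG η g x ≠ 0)
    (ui : (Fin n → ℝ) → Fin m → ℝ)
    (hui : ∀ x, ui x =
      if LieF η f x < 0 then
        fun i => -(LieF η f x) * LieG η g x i /
          ((∑ k, LieG η g x k * LieG η g x k) + (η x) ^ 2)
      else 0) :
    ∀ x ∈ frontier D,
      (0 ≤ LieF η f x + ∑ i, LieG η g x i * ui x i) ∧
      ∃ u : Fin m → ℝ, 0 ≤ LieF η f x + ∑ i, LieG η g x i * u i := by
  intro x hx
  have hηc : Continuous η := hη.continuous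
  -- η x = 0 on the frontier
  have hsubst : frontier D ⊆ {x | 0 ≤ η x} := by
    rw [hD]
    exact (isClosed_le continuous_const hηc).frontier_subset
  have h1 : 0 ≤ η x := hsubst hx
  have h2 : η x ≤ 0 := by
    have hx' : x ∈ closure Dᶜ := by
      rw [← frontier_compl] at hx
      exact frontier_subset_closure hx
    have : closure Dᶜ ⊆ {x | η x ≤ 0} := by
      apply closure_minimal
      · rw [hD]
        intro y hy
        simp only [Set.mem_compl_iff, Set.mem_setOf_eq, not_le] at hy ⊢
        exact le_of_lt hy
      · exact isClosed_le hηc continuous_const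
    exact this hx'
  have hηx : η x = 0 := le_antisymm h2 h1
  have key : 0 ≤ LieF η f x + ∑ i, LieG η g x i * ui x i := by
    rw [hui x]
    by_cases hF : LieF η f x < 0
    · have hG : LieG η g x ≠ 0 := hbd x hx (le_of_lt hF)
      set S := ∑ k, LieG η g x k * LieG η g x k with hS
      have hSpos : 0 < S := by
        obtain ⟨i, hi⟩ := Function.ne_iff.mp hG
        apply Finset.sum_pos' (fun k _ => mul_self_nonneg _)
        exact ⟨i, Finset.mem_univ i, mul_self_pos.mpr hi⟩
      rw [if_pos hF]
      have hsum : ∑ i, LieG η g x i *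
          (-(LieF η f x) * LieG η g x i / (S + (η x) ^ 2)) = -(LieF η f x) := by
        rw [hηx]
        have : ∀ i, LieG η g x i * (-(LieF η f x) * LieG η g x i / (S + 0 ^ 2))
            = (-(LieF η f x) / S) * (LieG η g x i * LieG η g x i) := by
          intro i; ring
        rw [Finset.sum_congr rfl (fun i _ => this i), ← Finset.mul_sum, ← hS]
        exact div_mul_cancel₀ _ (ne_of_gt hSpos)
      rw [hsum]
      simp
    · rw [if_neg hF]
      simp only [Pi.zero_apply, mul_zero, Finset.sum_const_zero, add_zero]
      linarith [not_lt.mp hF]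
  exact ⟨key, ui x, key⟩
end

section
/- Let b_1, …, b_ℓ : ℝ^n → ℝ be continuously differentiable, let g : ℝ^n → ℝ^{n×m}, let ρ > 0, define h(x) = softmin_ρ(b_1(x), …, b_ℓ(x)), and let x ∈ ℝ^n. If the zero vector of ℝ^{1×m} is not in the convex hull of {L_g b_1(x), …, L_g b_ℓ(x)}, then L_g h(x) ≠ 0. -/
/-! The differential of the soft minimum is a convex combination of the differentials of the
`b_j`, with the Gibbs weights `e^{-ρ b_j(x)} / Σ_i e^{-ρ b_i(x)}`. Hence `L_g h(x)` is the same
convex combination of the `L_g b_j(x)`, and it vanishes only if `0` lies in their convex hull. -/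

/-- The log-sum-exponential soft minimum. -/
noncomputable def softmin {N : ℕ} (ρ : ℝ) (z : Fin N → ℝ) : ℝ :=
  -(1 / ρ) * Real.log (∑ i, Real.exp (-ρ * z i))

open Finset

noncomputable def softminWeight {N : ℕ} (ρ : ℝ) (z : Fin N → ℝ) (j : Fin N) : ℝ :=
  Real.exp (-ρ * z j) / ∑ i, Real.exp (-ρ * z i)

lemma softminWeight_nonneg {N : ℕ} (ρ : ℝ) (z : Fin N → ℝ) (j : Fin N) :
    0 ≤ softminWeight ρ z j :=
  div_nonneg (Real.exp_pos _).le (sum_nonneg fun _ _ => (Real.exp_pos _).le)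

lemma sum_exp_neg_mul_pos {ι : Type*} [Fintype ι] [Nonempty ι] (ρ : ℝ) (z : ι → ℝ) :
    0 < ∑ i, Real.exp (-ρ * z i) :=
  sum_pos (fun _ _ => Real.exp_pos _) univ_nonempty

lemma sum_softminWeight {N : ℕ} [Nonempty (Fin N)] (ρ : ℝ) (z : Fin N → ℝ) :
    ∑ j, softminWeight ρ z j = 1 := by
  simp only [softminWeight]
  rw [← sum_div, div_self (sum_exp_neg_mul_pos ρ z).ne']

lemma hasFDerivAt_softmin {E : Type*} [NormedAddCommGroup E] [NormedSpace ℝ E]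
    {N : ℕ} [Nonempty (Fin N)] {ρ : ℝ} (hρ : ρ ≠ 0) {f : Fin N → E → ℝ}
    {f' : Fin N → E →L[ℝ] ℝ} {x : E} (hf : ∀ j, HasFDerivAt (f j) (f' j) x) :
    HasFDerivAt (fun y => softmin ρ fun j => f j y)
      (∑ j, softminWeight ρ (fun j => f j x) j • f' j) x := by
  have hsum : HasFDerivAt (fun y => ∑ j, Real.exp (-ρ * f j y))
      (∑ j, Real.exp (-ρ * f j x) • (-ρ) • f' j) x :=
    HasFDerivAt.fun_sum fun j _ => ((hf j).const_mul (-ρ)).exp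
  refine ((hsum.log (sum_exp_neg_mul_pos ρ _).ne').const_mul (-(1 / ρ))).congr_fderiv ?_
  simp only [smul_sum, smul_smul, softminWeight]
  refine sum_congr rfl fun j _ => congrArg (· • f' j) ?_
  field_simp

lemma LieG_eq_sum_smul_of_hasFDerivAt {n m N : ℕ} {η : (Fin n → ℝ) → ℝ}
    {b : Fin N → (Fin n → ℝ) → ℝ} {g : (Fin n → ℝ) → Fin n → Fin m → ℝ} {x : Fin n → ℝ}
    {c : Fin N → ℝ} (hη : HasFDerivAt η (∑ j, c j • fderiv ℝ (b j) x) x) :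
    LieG η g x = ∑ j, c j • LieG (b j) g x := by
  ext i
  simp [LieG, hη.fderiv]

/-- Proposition 5: if the zero row vector is not in the convex hull of
`{L_g b_1(x), …, L_g b_ℓ(x)}`, then `L_g h(x) ≠ 0`, where `h` is the
soft minimum of the `b_j`. -/
theorem LieG_softmin_ne_zero {n m ℓ : ℕ} (hℓ : 0 < ℓ)
    (b : Fin ℓ → (Fin n → ℝ) → ℝ) (hb : ∀ j, ContDiff ℝ 1 (b j))
    (g : (Fin n → ℝ) → Fin n → Fin m → ℝ)
    (ρ : ℝ) (hρ : 0 < ρ)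
    (h : (Fin n → ℝ) → ℝ) (hdef : ∀ x, h x = softmin ρ fun j => b j x)
    (x : Fin n → ℝ)
    (hconv : (0 : Fin m → ℝ) ∉ convexHull ℝ (Set.range fun j => LieG (b j) g x)) :
    LieG h g x ≠ 0 := by
  have : Nonempty (Fin ℓ) := Fin.pos_iff_nonempty.mp hℓ
  have hh : HasFDerivAt h
      (∑ j, softminWeight ρ (fun j => b j x) j • fderiv ℝ (b j) x) x := by
    rw [funext hdef]
    exact hasFDerivAt_softmin hρ.ne' fun j =>
      ((hb j).differentiable one_ne_zero).differentiableAt.hasFDerivAt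
  intro hzero
  refine hconv (mem_convexHull_of_exists_fintype (softminWeight ρ fun j => b j x)
    (fun j => LieG (b j) g x) (softminWeight_nonneg ρ _) (sum_softminWeight ρ _)
    Set.mem_range_self ?_)
  rw [← LieG_eq_sum_smul_of_hasFDerivAt hh, hzero]
end

section
/- Consider the cascade setting, and assume that for all x_2 ∈ ℝ^{n_2} and all j ∈ {0, …, r_2 − 2}, L_{g_2} L_{f_2}^j ξ_2(x_2) = 0. Let ν : ℝ^{n_1} → ℝ^{ℓ_1} be smooth and define ν̂(x̂) = ν(x_1) for x̂ = (x_1, x_2). Then for all x̂ ∈ ℝ^{n_1+n_2}: (a) for every j ∈ {0, 1, …, r_2 − 1}, L_{ĝ} L_{f̂}^j ν̂(x̂) = 0; and (b) L_{ĝ} L_{f̂}^{r_2} ν̂(x̂) = [L_{g_1} ν(x_1)] · L_{g_2} L_{f_2}^{r_2 − 1} ξ_2(x_2). -/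
/-- Componentwise Lie derivative of a vector-valued output `η : E → ℝ^ℓ` along a
vector field `f : E → E`: `(L_f η)(x) i = (η_i)′(x) f(x)`. -/
noncomputable def LieFV {E : Type*} [NormedAddCommGroup E] [NormedSpace ℝ E] {ℓ : ℕ}
    (f : E → E) (η : E → Fin ℓ → ℝ) : E → Fin ℓ → ℝ :=
  fun x i => fderiv ℝ (fun y => η y i) x (f x)

/-- Iterated Lie derivative: `L_f^0 η = η`, `L_f^{k+1} η = L_f (L_f^k η)`. -/
noncomputable def LieFVIter {E : Type*} [NormedAddCommGroup E] [NormedSpace ℝ E] {ℓ : ℕ}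
    (f : E → E) (η : E → Fin ℓ → ℝ) : ℕ → (E → Fin ℓ → ℝ)
  | 0 => η
  | k + 1 => LieFV f (LieFVIter f η k)

/-- Lie derivative of a vector-valued output `η : E → ℝ^ℓ` along the columns of a
control matrix `g` (given columnwise as `g : E → Fin m → E`):
`(L_g η)(x) i j = (η_i)′(x) (g(x) e_j)`, an `ℓ × m` matrix. -/
noncomputable def LieGV {E : Type*} [NormedAddCommGroup E] [NormedSpace ℝ E] {ℓ m : ℕ}
    (g : E → Fin m → E) (η : E → Fin ℓ → ℝ) : E → Fin ℓ → Fin m → ℝ :=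
  fun x i j => fderiv ℝ (fun y => η y i) x (g x j)

section helpers
variable {E : Type*} [NormedAddCommGroup E] [NormedSpace ℝ E]

lemma contDiff_lieFV {ℓ : ℕ} {f : E → E} {η : E → Fin ℓ → ℝ}
    (hf : ContDiff ℝ (⊤ : ℕ∞) f) (hη : ContDiff ℝ (⊤ : ℕ∞) η) : ContDiff ℝ (⊤ : ℕ∞) (LieFV f η) := by
  rw [contDiff_pi] at hη ⊢
  intro i
  exact isBoundedBilinearMap_apply.contDiff.comp
    (((hη i).fderiv_right (by simp)).prodMk hf)

lemma contDiff_lieFVIter {ℓ : ℕ} {f : E → E} {η : E → Fin ℓ → ℝ}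
    (hf : ContDiff ℝ (⊤ : ℕ∞) f) (hη : ContDiff ℝ (⊤ : ℕ∞) η) (j : ℕ) :
    ContDiff ℝ (⊤ : ℕ∞) (LieFVIter f η j) := by
  induction j with
  | zero => exact hη
  | succ k ih => exact contDiff_lieFV hf ih

lemma contDiff_lieGV {ℓ m : ℕ} {g : E → Fin m → E} {η : E → Fin ℓ → ℝ}
    (hg : ContDiff ℝ (⊤ : ℕ∞) g) (hη : ContDiff ℝ (⊤ : ℕ∞) η) : ContDiff ℝ (⊤ : ℕ∞) (LieGV g η) := by
  rw [contDiff_pi] at hη ⊢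
  intro i
  rw [contDiff_pi]
  intro k
  exact isBoundedBilinearMap_apply.contDiff.comp
    (((hη i).fderiv_right (by simp)).prodMk (contDiff_pi.1 hg k))

end helpers

section cascade
variable {E₁ E₂ : Type*} [NormedAddCommGroup E₁] [NormedSpace ℝ E₁]
  [NormedAddCommGroup E₂] [NormedSpace ℝ E₂] {m₁ ℓ₁ : ℕ}

lemma fderiv_iter_step {f₂ : E₂ → E₂} (hf₂ : ContDiff ℝ (⊤ : ℕ∞) f₂)
    {ξ₂ : E₂ → Fin m₁ → ℝ} (hξ₂ : ContDiff ℝ (⊤ : ℕ∞) ξ₂) (t : ℕ) (x : E₂) :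
    fderiv ℝ (LieFVIter f₂ ξ₂ t) x (f₂ x) = LieFVIter f₂ ξ₂ (t + 1) x := by
  rw [fderiv_pi (fun k => contDiff_pi.1 (contDiff_lieFVIter hf₂ hξ₂ t) k |>.differentiable (by simp) x)]
  rfl

lemma fderiv_iter_dir {f₂ : E₂ → E₂} (hf₂ : ContDiff ℝ (⊤ : ℕ∞) f₂)
    {ξ₂ : E₂ → Fin m₁ → ℝ} (hξ₂ : ContDiff ℝ (⊤ : ℕ∞) ξ₂) (t : ℕ) (x : E₂) (w : E₂) :
    fderiv ℝ (LieFVIter f₂ ξ₂ t) x w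
      = fun k => fderiv ℝ (fun y => LieFVIter f₂ ξ₂ t y k) x w := by
  rw [fderiv_pi (fun k => contDiff_pi.1 (contDiff_lieFVIter hf₂ hξ₂ t) k |>.differentiable (by simp) x)]
  rfl

lemma expr_fderiv_apply
    {f₂ : E₂ → E₂} (hf₂ : ContDiff ℝ (⊤ : ℕ∞) f₂)
    {ξ₂ : E₂ → Fin m₁ → ℝ} (hξ₂ : ContDiff ℝ (⊤ : ℕ∞) ξ₂)
    {g₁ : E₁ → Fin m₁ → E₁} (hg₁ : ContDiff ℝ (⊤ : ℕ∞) g₁)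
    {ν : E₁ → Fin ℓ₁ → ℝ} (hν : ContDiff ℝ (⊤ : ℕ∞) ν)
    (J : ℕ) (θ : (E₁ × (Fin J → Fin m₁ → ℝ)) → Fin ℓ₁ → ℝ) (hθ : ContDiff ℝ (⊤ : ℕ∞) θ)
    (p : E₁ × E₂) (i : Fin ℓ₁) (v : E₁) (w : E₂) :
    fderiv ℝ (fun q : E₁ × E₂ =>
        θ (q.1, fun t : Fin J => LieFVIter f₂ ξ₂ t q.2) i
          + ∑ k, LieGV g₁ ν q.1 i k * LieFVIter f₂ ξ₂ J q.2 k) p (v, w) =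
      fderiv ℝ (fun z => θ z i) (p.1, fun t : Fin J => LieFVIter f₂ ξ₂ t p.2)
        (v, fun t : Fin J => fderiv ℝ (LieFVIter f₂ ξ₂ t) p.2 w)
      + ∑ k, (fderiv ℝ (fun y => LieGV g₁ ν y i k) p.1 v * LieFVIter f₂ ξ₂ J p.2 k
          + LieGV g₁ ν p.1 i k * fderiv ℝ (fun y => LieFVIter f₂ ξ₂ J y k) p.2 w) := by
  have hσ : ContDiff ℝ (⊤ : ℕ∞) (fun y : E₂ => fun t : Fin J => LieFVIter f₂ ξ₂ t y) :=
    contDiff_pi.2 fun t => contDiff_lieFVIter hf₂ hξ₂ t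
  have hσd : HasFDerivAt (fun y : E₂ => fun t : Fin J => LieFVIter f₂ ξ₂ t y)
      (fderiv ℝ (fun y : E₂ => fun t : Fin J => LieFVIter f₂ ξ₂ t y) p.2) p.2 :=
    (hσ.differentiable (by simp) p.2).hasFDerivAt
  have h1 : HasFDerivAt (fun q : E₁ × E₂ => (q.1, fun t : Fin J => LieFVIter f₂ ξ₂ t q.2))
      ((ContinuousLinearMap.fst ℝ E₁ E₂).prod
        ((fderiv ℝ (fun y : E₂ => fun t : Fin J => LieFVIter f₂ ξ₂ t y) p.2).comp
          (ContinuousLinearMap.snd ℝ E₁ E₂))) p :=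
    (hasFDerivAt_fst).prodMk (hσd.comp p hasFDerivAt_snd)
  have hθi : HasFDerivAt (fun z => θ z i)
      (fderiv ℝ (fun z => θ z i) (p.1, fun t : Fin J => LieFVIter f₂ ξ₂ t p.2))
      (p.1, fun t : Fin J => LieFVIter f₂ ξ₂ t p.2) :=
    (((contDiff_pi.1 hθ i).differentiable (by simp)) _).hasFDerivAt
  have H1 := hθi.comp p h1
  have hcd : ∀ k, HasFDerivAt (fun y => LieGV g₁ ν y i k)
      (fderiv ℝ (fun y => LieGV g₁ ν y i k) p.1) p.1 := fun k =>
    ((((contDiff_pi.1 (contDiff_pi.1 (contDiff_lieGV hg₁ hν) i) k)).differentiable (by simp)) _).hasFDerivAt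
  have hτd : ∀ k, HasFDerivAt (fun y => LieFVIter f₂ ξ₂ J y k)
      (fderiv ℝ (fun y => LieFVIter f₂ ξ₂ J y k) p.2) p.2 := fun k =>
    (((contDiff_pi.1 (contDiff_lieFVIter hf₂ hξ₂ J) k).differentiable (by simp)) _).hasFDerivAt
  have H2 : HasFDerivAt (fun q : E₁ × E₂ => ∑ k, LieGV g₁ ν q.1 i k * LieFVIter f₂ ξ₂ J q.2 k)
      (∑ k, (LieGV g₁ ν p.1 i k •
          (fderiv ℝ (fun y => LieFVIter f₂ ξ₂ J y k) p.2).comp (ContinuousLinearMap.snd ℝ E₁ E₂)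
        + LieFVIter f₂ ξ₂ J p.2 k •
          (fderiv ℝ (fun y => LieGV g₁ ν y i k) p.1).comp (ContinuousLinearMap.fst ℝ E₁ E₂))) p := by
    apply HasFDerivAt.fun_sum
    intro k _
    exact ((hcd k).comp p hasFDerivAt_fst).mul ((hτd k).comp p hasFDerivAt_snd)
  simp only [Function.comp_def] at H1
  have H := H1.fun_add H2
  rw [H.fderiv]
  have hpi : fderiv ℝ (fun y : E₂ => fun t : Fin J => LieFVIter f₂ ξ₂ t y) p.2 w
      = fun t : Fin J => fderiv ℝ (LieFVIter f₂ ξ₂ t) p.2 w := by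
    rw [fderiv_pi (fun t : Fin J => (contDiff_lieFVIter hf₂ hξ₂ t).differentiable (by simp) p.2)]
    rfl
  simp only [ContinuousLinearMap.add_apply, ContinuousLinearMap.comp_apply,
    ContinuousLinearMap.prod_apply, ContinuousLinearMap.coe_fst', ContinuousLinearMap.coe_snd',
    ContinuousLinearMap.sum_apply, ContinuousLinearMap.smul_apply, smul_eq_mul, hpi]
  ring_nf
  congr 1
  apply Finset.sum_congr rfl
  intro k _
  ring

lemma key_structure
    {f₁ : E₁ → E₁} (hf₁ : ContDiff ℝ (⊤ : ℕ∞) f₁)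
    {g₁ : E₁ → Fin m₁ → E₁} (hg₁ : ContDiff ℝ (⊤ : ℕ∞) g₁)
    {f₂ : E₂ → E₂} (hf₂ : ContDiff ℝ (⊤ : ℕ∞) f₂)
    {ξ₂ : E₂ → Fin m₁ → ℝ} (hξ₂ : ContDiff ℝ (⊤ : ℕ∞) ξ₂)
    {ν : E₁ → Fin ℓ₁ → ℝ} (hν : ContDiff ℝ (⊤ : ℕ∞) ν)
    (νhat : E₁ × E₂ → Fin ℓ₁ → ℝ) (hνhat : ∀ p, νhat p = ν p.1)
    (fhat : E₁ × E₂ → E₁ × E₂)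
    (hfhat : ∀ p, fhat p = (f₁ p.1 + ∑ j, ξ₂ p.2 j • g₁ p.1 j, f₂ p.2)) :
    ∀ j : ℕ, ∃ θ : (E₁ × (Fin j → Fin m₁ → ℝ)) → Fin ℓ₁ → ℝ, ContDiff ℝ (⊤ : ℕ∞) θ ∧
      ∀ (p : E₁ × E₂) (i : Fin ℓ₁), LieFVIter fhat νhat (j + 1) p i
        = θ (p.1, fun t : Fin j => LieFVIter f₂ ξ₂ t p.2) i
          + ∑ k, LieGV g₁ ν p.1 i k * LieFVIter f₂ ξ₂ j p.2 k := by
  intro j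
  induction j with
  | zero =>
    refine ⟨fun z i => fderiv ℝ (fun y => ν y i) z.1 (f₁ z.1), ?_, ?_⟩
    · exact contDiff_pi.2 fun i => ContDiff.clm_apply
        (((contDiff_pi.1 hν i).fderiv_right (by simp)).comp contDiff_fst)
        (hf₁.comp contDiff_fst)
    · intro p i
      have hfun : (fun y => νhat y i) = fun y : E₁ × E₂ => ν y.1 i :=
        funext fun y => by rw [hνhat y]
      have hd : HasFDerivAt (fun y : E₁ × E₂ => ν y.1 i)
          ((fderiv ℝ (fun y => ν y i) p.1).comp (ContinuousLinearMap.fst ℝ E₁ E₂)) p :=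
        HasFDerivAt.comp p (((contDiff_pi.1 hν i).differentiable (by simp) p.1).hasFDerivAt)
          hasFDerivAt_fst
      show fderiv ℝ (fun y => νhat y i) p (fhat p) = _
      rw [hfun, hd.fderiv, hfhat]
      simp only [ContinuousLinearMap.comp_apply, ContinuousLinearMap.coe_fst', map_add, map_sum,
        map_smul, smul_eq_mul]
      show _ = _ + ∑ k, fderiv ℝ (fun y => ν y i) p.1 (g₁ p.1 k) * ξ₂ p.2 k
      congr 1
      exact Finset.sum_congr rfl fun k _ => mul_comm _ _
  | succ j ih =>
    obtain ⟨θ, hθ, hform⟩ := ih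
    refine ⟨fun z i =>
      fderiv ℝ (fun y => θ y i) (z.1, fun t : Fin j => z.2 t.castSucc)
        (f₁ z.1 + ∑ k, z.2 0 k • g₁ z.1 k, fun t : Fin j => z.2 t.succ)
      + ∑ k, fderiv ℝ (fun y => LieGV g₁ ν y i k) z.1
          (f₁ z.1 + ∑ k', z.2 0 k' • g₁ z.1 k') * z.2 (Fin.last j) k, ?_, ?_⟩
    · have hF : ContDiff ℝ (⊤ : ℕ∞) (fun z : E₁ × (Fin (j+1) → Fin m₁ → ℝ) =>
          f₁ z.1 + ∑ k, z.2 0 k • g₁ z.1 k) := by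
        refine (hf₁.comp contDiff_fst).add (ContDiff.sum fun k _ => ContDiff.smul ?_ ?_)
        · exact contDiff_pi.1 (contDiff_pi.1 contDiff_snd 0) k
        · exact (contDiff_pi.1 hg₁ k).comp contDiff_fst
      refine contDiff_pi.2 fun i => ContDiff.add ?_ ?_
      · exact ContDiff.clm_apply
          (((contDiff_pi.1 hθ i).fderiv_right (by simp)).comp
            (contDiff_fst.prodMk (contDiff_pi.2 fun t => contDiff_pi.1 contDiff_snd t.castSucc)))
          (hF.prodMk (contDiff_pi.2 fun t => contDiff_pi.1 contDiff_snd t.succ))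
      · refine ContDiff.sum fun k _ => ContDiff.mul ?_ ?_
        · exact ContDiff.clm_apply
            (((contDiff_pi.1 (contDiff_pi.1 (contDiff_lieGV hg₁ hν) i) k).fderiv_right
              (by simp)).comp contDiff_fst) hF
        · exact contDiff_pi.1 (contDiff_pi.1 contDiff_snd (Fin.last j)) k
    · intro p i
      have hfun : (fun q => LieFVIter fhat νhat (j + 1) q i)
          = fun q : E₁ × E₂ => θ (q.1, fun t : Fin j => LieFVIter f₂ ξ₂ t q.2) i
              + ∑ k, LieGV g₁ ν q.1 i k * LieFVIter f₂ ξ₂ j q.2 k :=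
        funext fun q => hform q i
      show fderiv ℝ (fun q => LieFVIter fhat νhat (j + 1) q i) p (fhat p) = _
      rw [hfun, hfhat]
      rw [expr_fderiv_apply hf₂ hξ₂ hg₁ hν j θ hθ p i _ _]
      simp only [Fin.coe_castSucc, Fin.val_succ, Fin.val_last, Fin.val_zero]
      have hsub : ∀ t : Fin j, fderiv ℝ (LieFVIter f₂ ξ₂ t) p.2 (f₂ p.2)
          = LieFVIter f₂ ξ₂ (t + 1) p.2 := fun t => fderiv_iter_step hf₂ hξ₂ t p.2
      simp only [hsub]
      have h0 : (fun t : Fin (j+1) => LieFVIter f₂ ξ₂ t p.2) 0 = ξ₂ p.2 := rfl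
      rw [Finset.sum_add_distrib]
      have h00 : LieFVIter f₂ ξ₂ 0 = ξ₂ := rfl
      have hstep2 : ∀ x, fderiv ℝ (fun y => LieFVIter f₂ ξ₂ j y x) p.2 (f₂ p.2)
          = LieFVIter f₂ ξ₂ (j + 1) p.2 x := fun x => rfl
      simp only [h00, hstep2]
      ring
end cascade

/-- Lemma 5: in the cascade setting, for `ν̂(x̂) = ν(x₁)`, the Lie derivatives
`L_ĝ L_f̂^j ν̂` vanish for `j ∈ {0,…,r₂−1}`, and
`L_ĝ L_f̂^{r₂} ν̂(x̂) = [L_{g₁} ν(x₁)] · L_{g₂} L_{f₂}^{r₂−1} ξ₂(x₂)`. -/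
theorem cascade_lie_derivatives_of_drift_output {n₁ n₂ m₁ m₂ ℓ₁ : ℕ}
    (f₁ : (Fin n₁ → ℝ) → Fin n₁ → ℝ) (hf₁ : ContDiff ℝ (⊤ : ℕ∞) f₁)
    (g₁ : (Fin n₁ → ℝ) → Fin m₁ → Fin n₁ → ℝ) (hg₁ : ContDiff ℝ (⊤ : ℕ∞) g₁)
    (f₂ : (Fin n₂ → ℝ) → Fin n₂ → ℝ) (hf₂ : ContDiff ℝ (⊤ : ℕ∞) f₂)
    (g₂ : (Fin n₂ → ℝ) → Fin m₂ → Fin n₂ → ℝ) (hg₂ : ContDiff ℝ (⊤ : ℕ∞) g₂)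
    (ξ₂ : (Fin n₂ → ℝ) → Fin m₁ → ℝ) (hξ₂ : ContDiff ℝ (⊤ : ℕ∞) ξ₂)
    (r₂ : ℕ) (hr₂ : 1 ≤ r₂)
    (hrel₂ : ∀ x₂ : Fin n₂ → ℝ, ∀ j, j + 2 ≤ r₂ →
      LieGV (fun x₂ j => g₂ x₂ j) (LieFVIter f₂ ξ₂ j) x₂ = 0)
    (ν : (Fin n₁ → ℝ) → Fin ℓ₁ → ℝ) (hν : ContDiff ℝ (⊤ : ℕ∞) ν)
    (νhat : ((Fin n₁ → ℝ) × (Fin n₂ → ℝ)) → Fin ℓ₁ → ℝ)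
    (hνhat : ∀ p, νhat p = ν p.1)
    (fhat : ((Fin n₁ → ℝ) × (Fin n₂ → ℝ)) → (Fin n₁ → ℝ) × (Fin n₂ → ℝ))
    (hfhat : ∀ p, fhat p = (f₁ p.1 + ∑ j, ξ₂ p.2 j • g₁ p.1 j, f₂ p.2))
    (ghat : ((Fin n₁ → ℝ) × (Fin n₂ → ℝ)) → Fin m₂ → (Fin n₁ → ℝ) × (Fin n₂ → ℝ))
    (hghat : ∀ p j, ghat p j = (0, g₂ p.2 j)) :
    ∀ p : (Fin n₁ → ℝ) × (Fin n₂ → ℝ),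
      (∀ j, j < r₂ → LieGV ghat (LieFVIter fhat νhat j) p = 0) ∧
      (∀ i j, LieGV ghat (LieFVIter fhat νhat r₂) p i j =
        ∑ k, LieGV g₁ ν p.1 i k * LieGV g₂ (LieFVIter f₂ ξ₂ (r₂ - 1)) p.2 k j) := by
  have main : ∀ J : ℕ, J + 1 ≤ r₂ →
      ∀ (p : (Fin n₁ → ℝ) × (Fin n₂ → ℝ)) (i : Fin ℓ₁) (l : Fin m₂),
      LieGV ghat (LieFVIter fhat νhat (J + 1)) p i l
        = ∑ k, LieGV g₁ ν p.1 i k * LieGV g₂ (LieFVIter f₂ ξ₂ J) p.2 k l := by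
    intro J hJ p i l
    obtain ⟨θ, hθ, hform⟩ := key_structure hf₁ hg₁ hf₂ hξ₂ hν νhat hνhat fhat hfhat J
    have hfun : (fun q => LieFVIter fhat νhat (J + 1) q i)
        = fun q : (Fin n₁ → ℝ) × (Fin n₂ → ℝ) =>
            θ (q.1, fun t : Fin J => LieFVIter f₂ ξ₂ t q.2) i
            + ∑ k, LieGV g₁ ν q.1 i k * LieFVIter f₂ ξ₂ J q.2 k :=
      funext fun q => hform q i
    show fderiv ℝ (fun q => LieFVIter fhat νhat (J + 1) q i) p (ghat p l) = _
    rw [hfun, hghat]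
    rw [expr_fderiv_apply hf₂ hξ₂ hg₁ hν J θ hθ p i 0 (g₂ p.2 l)]
    have hvan : ∀ t : Fin J, fderiv ℝ (LieFVIter f₂ ξ₂ t) p.2 (g₂ p.2 l) = 0 := by
      intro t
      rw [fderiv_iter_dir hf₂ hξ₂ t p.2 (g₂ p.2 l)]
      funext k
      have ht := t.isLt
      have h := congrFun (congrFun (hrel₂ p.2 t (by omega)) k) l
      simpa [LieGV] using h
    have hz : fderiv ℝ (fun z => θ z i) (p.1, fun t : Fin J => LieFVIter f₂ ξ₂ t p.2)
        ((0 : Fin n₁ → ℝ), fun t : Fin J => fderiv ℝ (LieFVIter f₂ ξ₂ t) p.2 (g₂ p.2 l)) = 0 := by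
      have h00 : ((0 : Fin n₁ → ℝ), fun t : Fin J => fderiv ℝ (LieFVIter f₂ ξ₂ t) p.2 (g₂ p.2 l))
          = (0 : (Fin n₁ → ℝ) × (Fin J → Fin m₁ → ℝ)) := by
        rw [Prod.mk_eq_zero]
        exact ⟨rfl, funext fun t => hvan t⟩
      rw [h00, map_zero]
    rw [hz, zero_add]
    simp only [map_zero, zero_mul, zero_add]
    rfl
  intro p
  constructor
  · intro j hj
    cases j with
    | zero =>
      funext i l
      show fderiv ℝ (fun q => νhat q i) p (ghat p l) = _
      have hfun : (fun q => νhat q i) = fun q : (Fin n₁ → ℝ) × (Fin n₂ → ℝ) => ν q.1 i :=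
        funext fun q => by rw [hνhat]
      have hd : HasFDerivAt (fun q : (Fin n₁ → ℝ) × (Fin n₂ → ℝ) => ν q.1 i)
          ((fderiv ℝ (fun y => ν y i) p.1).comp
            (ContinuousLinearMap.fst ℝ (Fin n₁ → ℝ) (Fin n₂ → ℝ))) p :=
        HasFDerivAt.comp p (((contDiff_pi.1 hν i).differentiable (by simp) p.1).hasFDerivAt)
          hasFDerivAt_fst
      rw [hfun, hghat, hd.fderiv]
      simp
    | succ J =>
      funext i l
      rw [main J (by omega) p i l]
      simp only [Pi.zero_apply]
      apply Finset.sum_eq_zero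
      intro k _
      have h := congrFun (congrFun (hrel₂ p.2 J (by omega)) k) l
      simp only [Pi.zero_apply] at h
      rw [show LieGV g₂ (LieFVIter f₂ ξ₂ J) p.2 k l
        = LieGV (fun x₂ j => g₂ x₂ j) (LieFVIter f₂ ξ₂ J) p.2 k l from rfl, h, mul_zero]
  · obtain ⟨J, rfl⟩ : ∃ J, r₂ = J + 1 := ⟨r₂ - 1, by omega⟩
    intro i l
    rw [main J le_rfl p i l]
    simp
end

section
/- Consider the cascade setting with output ĥ(x̂) = ξ_1(x_1), where ξ_1 : ℝ^{n_1} → ℝ^{ℓ_1} is smooth, and let X_1 ⊆ ℝ^{n_1} and X_2 ⊆ ℝ^{n_2} be open sets. Assume that for all x_1 ∈ X_1 and all i ∈ {0, …, r_1 − 2}, L_{g_1} L_{f_1}^i ξ_1(x_1) = 0, and for all x_2 ∈ X_2 and all i ∈ {0, …, r_2 − 2}, L_{g_2} L_{f_2}^i ξ_2(x_2) = 0. Then for all x̂ = (x_1, x_2) ∈ X_1 × X_2: (a) for every j ∈ {0, 1, …, r_1 + r_2 − 2}, L_{ĝ} L_{f̂}^j ĥ(x̂) = 0; and (b) L_{ĝ}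 L_{f̂}^{r_1 + r_2 − 1} ĥ(x̂) = [L_{g_1} L_{f_1}^{r_1 − 1} ξ_1(x_1)] · L_{g_2} L_{f_2}^{r_2 − 1} ξ_2(x_2). -/
open scoped ContDiff

section Aux

variable {E E₁ E₂ : Type*} [NormedAddCommGroup E] [NormedSpace ℝ E]
  [NormedAddCommGroup E₁] [NormedSpace ℝ E₁] [NormedAddCommGroup E₂] [NormedSpace ℝ E₂]
  {ℓ m m₁ s : ℕ}

lemma LieFVIter_zero (f : E → E) (η : E → Fin ℓ → ℝ) : LieFVIter f η 0 = η := rfl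

lemma LieFVIter_succ (f : E → E) (η : E → Fin ℓ → ℝ) (k : ℕ) :
    LieFVIter f η (k+1) = LieFV f (LieFVIter f η k) := rfl

lemma diff1 {F : Type*} [NormedAddCommGroup F] [NormedSpace ℝ F] {f : E → F}
    (hf : ContDiff ℝ ∞ f) (x : E) : DifferentiableAt ℝ f x :=
  (hf.differentiable (by simp)) x

lemma LieFV.contDiff {f : E → E} {η : E → Fin ℓ → ℝ} (hf : ContDiff ℝ ∞ f)
    (hη : ContDiff ℝ ∞ η) : ContDiff ℝ ∞ (LieFV f η) :=
  contDiff_pi.2 fun i =>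
    ContDiff.clm_apply ((contDiff_pi.1 hη i).fderiv_right (by simp)) hf

lemma LieFVIter.contDiff {f : E → E} {η : E → Fin ℓ → ℝ} (hf : ContDiff ℝ ∞ f)
    (hη : ContDiff ℝ ∞ η) (k : ℕ) : ContDiff ℝ ∞ (LieFVIter f η k) := by
  induction k with
  | zero => exact hη
  | succ k ih => exact LieFV.contDiff hf ih

lemma LieGV.contDiff {g : E → Fin m → E} {η : E → Fin ℓ → ℝ} (hg : ContDiff ℝ ∞ g)
    (hη : ContDiff ℝ ∞ η) : ContDiff ℝ ∞ (LieGV g η) :=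
  contDiff_pi.2 fun i => contDiff_pi.2 fun j =>
    ContDiff.clm_apply ((contDiff_pi.1 hη i).fderiv_right (by simp)) (contDiff_pi.1 hg j)

lemma fst_rep_fderiv {a : E₁ → Fin ℓ → ℝ} (ha : ContDiff ℝ ∞ a) (p v : E₁ × E₂) (i : Fin ℓ) :
    fderiv ℝ (fun q : E₁ × E₂ => a q.1 i) p v = fderiv ℝ (fun y => a y i) p.1 v.1 := by
  have h : HasFDerivAt (fun q : E₁ × E₂ => a q.1 i)
      ((fderiv ℝ (fun y => a y i) p.1).comp (ContinuousLinearMap.fst ℝ E₁ E₂)) p :=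
    (diff1 (contDiff_pi.1 ha i) p.1).hasFDerivAt.comp p hasFDerivAt_fst
  rw [h.fderiv]; rfl

open ContinuousLinearMap in
lemma rep_fderiv
    (G : E₁ × (Fin s → Fin m₁ → ℝ) → Fin ℓ → ℝ) (hG : ContDiff ℝ ∞ G)
    (B : E₁ → Fin ℓ → Fin m₁ → ℝ) (hB : ContDiff ℝ ∞ B)
    (c : ℕ → E₂ → Fin m₁ → ℝ) (hc : ∀ t, ContDiff ℝ ∞ (c t))
    (p : E₁ × E₂) (i : Fin ℓ) (v : E₁ × E₂) :
    fderiv ℝ (fun q : E₁ × E₂ =>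
        G (q.1, fun t : Fin s => c t q.2) i + ∑ k, B q.1 i k * c s q.2 k) p v
      = fderiv ℝ (fun z => G z i) (p.1, fun t : Fin s => c t p.2)
          (v.1, fun t : Fin s => fun k => fderiv ℝ (fun y => c t y k) p.2 v.2)
        + ((∑ k, fderiv ℝ (fun y => B y i k) p.1 v.1 * c s p.2 k)
        + ∑ k, B p.1 i k * fderiv ℝ (fun y => c s y k) p.2 v.2) := by
  have hC : HasFDerivAt (fun q : E₁ × E₂ => (q.1, fun t : Fin s => c t q.2))
      ((fst ℝ E₁ E₂).prod
        (ContinuousLinearMap.pi fun t : Fin s => (fderiv ℝ (c ↑t) p.2).comp (snd ℝ E₁ E₂))) p := by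
    refine hasFDerivAt_fst.prodMk ?_
    refine hasFDerivAt_pi'.2 fun t => ?_
    rw [ContinuousLinearMap.proj_pi]
    exact (diff1 (hc ↑t) p.2).hasFDerivAt.comp p hasFDerivAt_snd
  have hGi : HasFDerivAt (fun z => G z i)
      (fderiv ℝ (fun z => G z i) (p.1, fun t : Fin s => c ↑t p.2))
      (p.1, fun t : Fin s => c ↑t p.2) :=
    (diff1 (contDiff_pi.1 hG i) _).hasFDerivAt
  have h1 : HasFDerivAt (fun q : E₁ × E₂ => G (q.1, fun t : Fin s => c ↑t q.2) i)
      ((fderiv ℝ (fun z => G z i) (p.1, fun t : Fin s => c ↑t p.2)).comp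
        ((fst ℝ E₁ E₂).prod
          (ContinuousLinearMap.pi fun t : Fin s => (fderiv ℝ (c ↑t) p.2).comp (snd ℝ E₁ E₂)))) p :=
    by have := HasFDerivAt.comp (g := fun z => G z i) p hGi hC; exact this
  have h2 : ∀ k : Fin m₁, HasFDerivAt (fun q : E₁ × E₂ => B q.1 i k * c s q.2 k)
      (B p.1 i k • ((fderiv ℝ (fun y => c s y k) p.2).comp (snd ℝ E₁ E₂))
        + c s p.2 k • ((fderiv ℝ (fun y => B y i k) p.1).comp (fst ℝ E₁ E₂))) p := by
    intro k
    exact HasFDerivAt.mul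
      ((diff1 (contDiff_pi.1 (contDiff_pi.1 hB i) k) p.1).hasFDerivAt.comp p hasFDerivAt_fst)
      ((diff1 (contDiff_pi.1 (hc s) k) p.2).hasFDerivAt.comp p hasFDerivAt_snd)
  have htot := h1.fun_add (HasFDerivAt.fun_sum (fun k (_ : k ∈ Finset.univ) => h2 k))
  rw [htot.fderiv]
  have hpi : ∀ t : ℕ, fderiv ℝ (c t) p.2
      = ContinuousLinearMap.pi fun k => fderiv ℝ (fun y => c t y k) p.2 := by
    intro t
    exact fderiv_pi (fun k => diff1 (contDiff_pi.1 (hc t) k) p.2)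
  simp only [ContinuousLinearMap.add_apply, ContinuousLinearMap.coe_comp', Function.comp,
    ContinuousLinearMap.sum_apply, ContinuousLinearMap.smul_apply, ContinuousLinearMap.coe_fst',
    ContinuousLinearMap.coe_snd', ContinuousLinearMap.prod_apply, ContinuousLinearMap.pi_apply,
    smul_eq_mul, hpi, Finset.sum_add_distrib]
  have h3 : (∑ x : Fin m₁, c s p.2 x * (fderiv ℝ (fun y => B y i x) p.1) v.1)
      = ∑ k : Fin m₁, (fderiv ℝ (fun y => B y i k) p.1) v.1 * c s p.2 k :=
    Finset.sum_congr rfl fun k _ => mul_comm _ _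
  rw [h3]
  have h4 : ((ContinuousLinearMap.pi fun t : Fin s =>
      (ContinuousLinearMap.pi fun k => fderiv ℝ (fun y => c (↑t) y k) p.2).comp
        (ContinuousLinearMap.snd ℝ E₁ E₂)) v)
      = fun (t : Fin s) k => (fderiv ℝ (fun y => c (↑t) y k) p.2) v.2 := rfl
  rw [h4]
  ring

end Aux

set_option maxHeartbeats 1000000 in
/-- Theorem 3 (relative degree of a nonlinear cascade): with output
`ĥ(x̂) = ξ₁(x₁)`, for all `x̂ ∈ X₁ × X₂` the Lie derivatives `L_ĝ L_f̂^j ĥ`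
vanish for `j ∈ {0,…,r₁+r₂−2}`, and
`L_ĝ L_f̂^{r₁+r₂−1} ĥ(x̂) = [L_{g₁} L_{f₁}^{r₁−1} ξ₁(x₁)] · L_{g₂} L_{f₂}^{r₂−1} ξ₂(x₂)`. -/
theorem cascade_relative_degree {n₁ n₂ m₁ m₂ ℓ₁ : ℕ}
    (f₁ : (Fin n₁ → ℝ) → Fin n₁ → ℝ) (hf₁ : ContDiff ℝ (⊤ : ℕ∞) f₁)
    (g₁ : (Fin n₁ → ℝ) → Fin m₁ → Fin n₁ → ℝ) (hg₁ : ContDiff ℝ (⊤ : ℕ∞) g₁)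
    (f₂ : (Fin n₂ → ℝ) → Fin n₂ → ℝ) (hf₂ : ContDiff ℝ (⊤ : ℕ∞) f₂)
    (g₂ : (Fin n₂ → ℝ) → Fin m₂ → Fin n₂ → ℝ) (hg₂ : ContDiff ℝ (⊤ : ℕ∞) g₂)
    (ξ₁ : (Fin n₁ → ℝ) → Fin ℓ₁ → ℝ) (hξ₁ : ContDiff ℝ (⊤ : ℕ∞) ξ₁)
    (ξ₂ : (Fin n₂ → ℝ) → Fin m₁ → ℝ) (hξ₂ : ContDiff ℝ (⊤ : ℕ∞) ξ₂)
    (r₁ r₂ : ℕ) (hr₁ : 1 ≤ r₁) (hr₂ : 1 ≤ r₂)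
    (X₁ : Set (Fin n₁ → ℝ)) (hX₁ : IsOpen X₁)
    (X₂ : Set (Fin n₂ → ℝ)) (hX₂ : IsOpen X₂)
    (hrel₁ : ∀ x₁ ∈ X₁, ∀ i, i + 2 ≤ r₁ → LieGV g₁ (LieFVIter f₁ ξ₁ i) x₁ = 0)
    (hrel₂ : ∀ x₂ ∈ X₂, ∀ i, i + 2 ≤ r₂ → LieGV g₂ (LieFVIter f₂ ξ₂ i) x₂ = 0)
    (hhat : ((Fin n₁ → ℝ) × (Fin n₂ → ℝ)) → Fin ℓ₁ → ℝ)
    (hhhat : ∀ p, hhat p = ξ₁ p.1)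
    (fhat : ((Fin n₁ → ℝ) × (Fin n₂ → ℝ)) → (Fin n₁ → ℝ) × (Fin n₂ → ℝ))
    (hfhat : ∀ p, fhat p = (f₁ p.1 + ∑ j, ξ₂ p.2 j • g₁ p.1 j, f₂ p.2))
    (ghat : ((Fin n₁ → ℝ) × (Fin n₂ → ℝ)) → Fin m₂ → (Fin n₁ → ℝ) × (Fin n₂ → ℝ))
    (hghat : ∀ p j, ghat p j = (0, g₂ p.2 j)) :
    ∀ p : (Fin n₁ → ℝ) × (Fin n₂ → ℝ), p.1 ∈ X₁ → p.2 ∈ X₂ →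
      (∀ j, j + 2 ≤ r₁ + r₂ → LieGV ghat (LieFVIter fhat hhat j) p = 0) ∧
      (∀ i j, LieGV ghat (LieFVIter fhat hhat (r₁ + r₂ - 1)) p i j =
        ∑ k, LieGV g₁ (LieFVIter f₁ ξ₁ (r₁ - 1)) p.1 i k *
          LieGV g₂ (LieFVIter f₂ ξ₂ (r₂ - 1)) p.2 k j) := by
  obtain ⟨R1, rfl⟩ : ∃ R, r₁ = R + 1 := ⟨r₁ - 1, by omega⟩
  obtain ⟨R2, rfl⟩ : ∃ R, r₂ = R + 1 := ⟨r₂ - 1, by omega⟩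
  have hf₁' : ContDiff ℝ ∞ f₁ := hf₁.of_le (by simp)
  have hg₁' : ContDiff ℝ ∞ g₁ := hg₁.of_le (by simp)
  have hf₂' : ContDiff ℝ ∞ f₂ := hf₂.of_le (by simp)
  have hg₂' : ContDiff ℝ ∞ g₂ := hg₂.of_le (by simp)
  have hξ₁' : ContDiff ℝ ∞ ξ₁ := hξ₁.of_le (by simp)
  have hξ₂' : ContDiff ℝ ∞ ξ₂ := hξ₂.of_le (by simp)
  have ha : ∀ j, ContDiff ℝ ∞ (LieFVIter f₁ ξ₁ j) := LieFVIter.contDiff hf₁' hξ₁'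
  have hc : ∀ t, ContDiff ℝ ∞ (LieFVIter f₂ ξ₂ t) := LieFVIter.contDiff hf₂' hξ₂'
  have hb : ContDiff ℝ ∞ (LieGV g₁ (LieFVIter f₁ ξ₁ R1)) := LieGV.contDiff hg₁' (ha R1)
  -- step along `fhat` for fst-representations
  have stepA : ∀ (j : ℕ),
      (∀ q : (Fin n₁ → ℝ) × (Fin n₂ → ℝ), q.1 ∈ X₁ → ∀ i,
        LieFVIter fhat hhat j q i = LieFVIter f₁ ξ₁ j q.1 i) →
      ∀ p : (Fin n₁ → ℝ) × (Fin n₂ → ℝ), p.1 ∈ X₁ → ∀ i,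
        LieFVIter fhat hhat (j+1) p i = LieFVIter f₁ ξ₁ (j+1) p.1 i
          + ∑ k, ξ₂ p.2 k * LieGV g₁ (LieFVIter f₁ ξ₁ j) p.1 i k := by
    intro j hrep p hp i
    have e1 : LieFVIter fhat hhat (j+1) p i
        = fderiv ℝ (fun q => LieFVIter fhat hhat j q i) p (fhat p) := rfl
    have hev : (fun q : (Fin n₁ → ℝ) × (Fin n₂ → ℝ) => LieFVIter fhat hhat j q i)
        =ᶠ[nhds p] (fun q => LieFVIter f₁ ξ₁ j q.1 i) := by
      filter_upwards [(hX₁.preimage continuous_fst).mem_nhds hp] with q hq using hrep q hq i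
    rw [e1, hev.fderiv_eq, fst_rep_fderiv (ha j) p (fhat p) i]
    have e2 : (fhat p).1 = f₁ p.1 + ∑ k, ξ₂ p.2 k • g₁ p.1 k := by rw [hfhat]
    rw [e2, map_add, map_sum]
    simp only [map_smul, smul_eq_mul]
    rfl
  -- Phase 1
  have phase1 : ∀ j, j ≤ R1 → ∀ p : (Fin n₁ → ℝ) × (Fin n₂ → ℝ), p.1 ∈ X₁ → ∀ i,
      LieFVIter fhat hhat j p i = LieFVIter f₁ ξ₁ j p.1 i := by
    intro j
    induction j with
    | zero =>
      intro _ p hp i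
      show hhat p i = ξ₁ p.1 i
      rw [hhhat p]
    | succ j ih =>
      intro hj p hp i
      rw [stepA j (fun q hq i => ih (by omega) q hq i) p hp i]
      have hz := hrel₁ p.1 hp j (by omega)
      simp [hz]
  -- Phase 2
  have phase2 : ∀ s : ℕ, ∃ G : (Fin n₁ → ℝ) × (Fin s → Fin m₁ → ℝ) → Fin ℓ₁ → ℝ,
      ContDiff ℝ ∞ G ∧ ∀ p : (Fin n₁ → ℝ) × (Fin n₂ → ℝ), p.1 ∈ X₁ → ∀ i,
        LieFVIter fhat hhat (R1+1+s) p i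
          = G (p.1, fun t : Fin s => LieFVIter f₂ ξ₂ ↑t p.2) i
            + ∑ k, LieGV g₁ (LieFVIter f₁ ξ₁ R1) p.1 i k * LieFVIter f₂ ξ₂ s p.2 k := by
    intro s
    induction s with
    | zero =>
      refine ⟨fun q i => LieFVIter f₁ ξ₁ (R1+1) q.1 i,
        contDiff_pi.2 fun i => (contDiff_pi.1 (ha (R1+1)) i).comp contDiff_fst, ?_⟩
      intro p hp i
      have := stepA R1 (phase1 R1 le_rfl) p hp i
      simp only [Nat.add_zero]
      rw [this]
      congr 1
      exact Finset.sum_congr rfl fun k _ => mul_comm _ _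
    | succ s ih =>
      obtain ⟨G, hG, hrep⟩ := ih
      refine ⟨fun q i =>
          fderiv ℝ (fun z => G z i) (q.1, fun t : Fin s => q.2 t.castSucc)
            (f₁ q.1 + ∑ j, q.2 0 j • g₁ q.1 j, fun t : Fin s => q.2 t.succ)
          + ∑ k, fderiv ℝ (fun y => LieGV g₁ (LieFVIter f₁ ξ₁ R1) y i k) q.1
              (f₁ q.1 + ∑ j, q.2 0 j • g₁ q.1 j) * q.2 (Fin.last s) k, ?_, ?_⟩
      · -- smoothness
        have hW : ContDiff ℝ ∞ (fun q : (Fin n₁ → ℝ) × (Fin (s+1) → Fin m₁ → ℝ) =>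
            f₁ q.1 + ∑ j, q.2 0 j • g₁ q.1 j) := by
          refine (hf₁'.comp contDiff_fst).add (ContDiff.sum fun j _ => ContDiff.fun_smul ?_ ?_)
          · exact (contDiff_apply ℝ ℝ j).comp
              ((contDiff_apply ℝ (Fin m₁ → ℝ) (0 : Fin (s+1))).comp contDiff_snd)
          · exact (contDiff_pi.1 hg₁' j).comp contDiff_fst
        refine contDiff_pi.2 fun i => ContDiff.add ?_ ?_
        · refine ContDiff.clm_apply ?_ ?_
          · refine ((contDiff_pi.1 hG i).fderiv_right (by simp)).comp ?_
            exact contDiff_fst.prodMk (contDiff_pi.2 fun t =>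
              (contDiff_apply ℝ (Fin m₁ → ℝ) t.castSucc).comp contDiff_snd)
          · exact hW.prodMk (contDiff_pi.2 fun t =>
              (contDiff_apply ℝ (Fin m₁ → ℝ) t.succ).comp contDiff_snd)
        · refine ContDiff.sum fun k _ => ContDiff.mul ?_ ?_
          · exact ContDiff.clm_apply
              (((contDiff_pi.1 (contDiff_pi.1 hb i) k).fderiv_right (by simp)).comp contDiff_fst)
              hW
          · exact (contDiff_apply ℝ ℝ k).comp
              ((contDiff_apply ℝ (Fin m₁ → ℝ) (Fin.last s)).comp contDiff_snd)
      · intro p hp i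
        have e1 : LieFVIter fhat hhat (R1+1+(s+1)) p i
            = fderiv ℝ (fun q => LieFVIter fhat hhat (R1+1+s) q i) p (fhat p) := rfl
        have hev : (fun q : (Fin n₁ → ℝ) × (Fin n₂ → ℝ) => LieFVIter fhat hhat (R1+1+s) q i)
            =ᶠ[nhds p] (fun q => G (q.1, fun t : Fin s => LieFVIter f₂ ξ₂ ↑t q.2) i
              + ∑ k, LieGV g₁ (LieFVIter f₁ ξ₁ R1) q.1 i k * LieFVIter f₂ ξ₂ s q.2 k) := by
          filter_upwards [(hX₁.preimage continuous_fst).mem_nhds hp] with q hq using hrep q hq i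
        rw [e1, hev.fderiv_eq,
          rep_fderiv G hG (LieGV g₁ (LieFVIter f₁ ξ₁ R1)) hb (LieFVIter f₂ ξ₂) hc p i (fhat p)]
        have e2 : (fhat p).1 = f₁ p.1 + ∑ j, ξ₂ p.2 j • g₁ p.1 j := by rw [hfhat]
        have e3 : (fhat p).2 = f₂ p.2 := by rw [hfhat]
        rw [e2, e3]
        simp only [Fin.coe_castSucc, Fin.val_succ, Fin.val_zero, Fin.val_last,
          LieFVIter_zero, LieFVIter_succ, LieFV]
        rw [add_assoc]
        rfl
  -- LieGV vanishing for phase-1 indices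
  have gzero1 : ∀ j, j ≤ R1 → ∀ p : (Fin n₁ → ℝ) × (Fin n₂ → ℝ), p.1 ∈ X₁ → ∀ i jj,
      LieGV ghat (LieFVIter fhat hhat j) p i jj = 0 := by
    intro j hj p hp i jj
    have e1 : LieGV ghat (LieFVIter fhat hhat j) p i jj
        = fderiv ℝ (fun q => LieFVIter fhat hhat j q i) p (ghat p jj) := rfl
    have hev : (fun q : (Fin n₁ → ℝ) × (Fin n₂ → ℝ) => LieFVIter fhat hhat j q i)
        =ᶠ[nhds p] (fun q => LieFVIter f₁ ξ₁ j q.1 i) := by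
      filter_upwards [(hX₁.preimage continuous_fst).mem_nhds hp] with q hq using phase1 j hj q hq i
    rw [e1, hev.fderiv_eq, fst_rep_fderiv (ha j) p (ghat p jj) i]
    have e2 : (ghat p jj).1 = 0 := by rw [hghat]
    rw [e2, map_zero]
  -- LieGV formula for phase-2 indices
  have gform : ∀ s, s ≤ R2 → ∀ p : (Fin n₁ → ℝ) × (Fin n₂ → ℝ), p.1 ∈ X₁ → p.2 ∈ X₂ → ∀ i jj,
      LieGV ghat (LieFVIter fhat hhat (R1+1+s)) p i jj
        = ∑ k, LieGV g₁ (LieFVIter f₁ ξ₁ R1) p.1 i k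
            * fderiv ℝ (fun y => LieFVIter f₂ ξ₂ s y k) p.2 (g₂ p.2 jj) := by
    intro s hs p hp1 hp2 i jj
    obtain ⟨G, hG, hrep⟩ := phase2 s
    have e1 : LieGV ghat (LieFVIter fhat hhat (R1+1+s)) p i jj
        = fderiv ℝ (fun q => LieFVIter fhat hhat (R1+1+s) q i) p (ghat p jj) := rfl
    have hev : (fun q : (Fin n₁ → ℝ) × (Fin n₂ → ℝ) => LieFVIter fhat hhat (R1+1+s) q i)
        =ᶠ[nhds p] (fun q => G (q.1, fun t : Fin s => LieFVIter f₂ ξ₂ ↑t q.2) i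
          + ∑ k, LieGV g₁ (LieFVIter f₁ ξ₁ R1) q.1 i k * LieFVIter f₂ ξ₂ s q.2 k) := by
      filter_upwards [(hX₁.preimage continuous_fst).mem_nhds hp1] with q hq using hrep q hq i
    rw [e1, hev.fderiv_eq,
      rep_fderiv G hG (LieGV g₁ (LieFVIter f₁ ξ₁ R1)) hb (LieFVIter f₂ ξ₂) hc p i (ghat p jj)]
    have e2 : (ghat p jj).1 = 0 := by rw [hghat]
    have e3 : (ghat p jj).2 = g₂ p.2 jj := by rw [hghat]
    rw [e2, e3]
    have hz : ∀ t : Fin s, ∀ k, fderiv ℝ (fun y => LieFVIter f₂ ξ₂ ↑t y k) p.2 (g₂ p.2 jj) = 0 := by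
      intro t k
      have ht := t.isLt
      have := congrFun (congrFun (hrel₂ p.2 hp2 ↑t (by omega)) k) jj
      simpa [LieGV] using this
    have hz2 : ((0 : Fin n₁ → ℝ), fun (t : Fin s) (k : Fin m₁) =>
        fderiv ℝ (fun y => LieFVIter f₂ ξ₂ ↑t y k) p.2 (g₂ p.2 jj))
        = (0 : (Fin n₁ → ℝ) × (Fin s → Fin m₁ → ℝ)) := by
      refine Prod.ext rfl ?_
      funext t k
      simp [hz t k]
    rw [hz2, map_zero]
    simp only [map_zero, zero_mul, Finset.sum_const_zero, zero_add]
  intro p hp1 hp2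
  constructor
  · intro j hj
    funext i jj
    simp only [Pi.zero_apply]
    rcases le_or_gt j R1 with h' | h'
    · exact gzero1 j h' p hp1 i jj
    · obtain ⟨s, rfl⟩ : ∃ s, j = R1+1+s := ⟨j - (R1+1), by omega⟩
      rw [gform s (by omega) p hp1 hp2 i jj]
      have hz : ∀ k, fderiv ℝ (fun y => LieFVIter f₂ ξ₂ s y k) p.2 (g₂ p.2 jj) = 0 := by
        intro k
        have := congrFun (congrFun (hrel₂ p.2 hp2 s (by omega)) k) jj
        simpa [LieGV] using this
      simp [hz]
  · intro i jj
    have hidx : R1 + 1 + (R2 + 1) - 1 = R1 + 1 + R2 := by omega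
    rw [hidx, gform R2 le_rfl p hp1 hp2 i jj]
    simp only [Nat.add_sub_cancel]
    rfl
end
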